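/- arXiv:math/0406395 — 4 statements merged into one kernel-verified Lean document; each statement's English description precedes it below -/
import Mathlib

section
/- For a complex number z with 0 < |z| ≤ 1, z² ≠ 1, and integers m > n ≥ 0, the bound |G(n,m;z) · z^{m-n}| = |z^{2(m-n)} - 1|/|z - z^{-1}| ≤ |z| · min(m - n, 2/|z² - 1|) holds. -/
noncomputable def G (z : ℂ) (n m : ℕ) : ℂ :=
  if n < m then (z ^ ((m : ℤ) - n) - z ^ ((n : ℤ) - m)) / (z - z⁻¹) else 0

theorem green_kernel_bound (z : ℂ) (hz : z ≠ 0) (hz1 : ‖z‖ ≤ 1)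
    (hz2 : z ^ 2 ≠ 1) (n m : ℕ) (h : n < m) :
    ‖G z n m * z ^ (m - n)‖ =
      ‖z ^ (2 * (m - n)) - 1‖ / ‖z - z⁻¹‖ ∧
    ‖G z n m * z ^ (m - n)‖ ≤
      ‖z‖ * min ((m : ℝ) - n) (2 / ‖z ^ 2 - 1‖) := by
  set d := m - n with hdd
  have hd1 : 1 ≤ d := by omega
  have hsq : z ^ 2 - 1 ≠ 0 := sub_ne_zero.mpr hz2
  have hzz : z - z⁻¹ ≠ 0 := by
    have : z - z⁻¹ = (z ^ 2 - 1) / z := by field_simp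
    rw [this]
    exact div_ne_zero hsq hz
  have hG : G z n m * z ^ d = (z ^ (2 * d) - 1) / (z - z⁻¹) := by
    rw [G, if_pos h, show ((m : ℤ) - n) = ((d : ℕ) : ℤ) by push_cast [hdd]; omega,
      show ((n : ℤ) - m) = -((d : ℕ) : ℤ) by push_cast [hdd]; omega,
      zpow_natCast, zpow_neg, zpow_natCast, div_mul_eq_mul_div]
    congr 1
    rw [sub_mul, inv_mul_cancel₀ (pow_ne_zero d hz), ← pow_add, two_mul]
  have heq : ‖G z n m * z ^ d‖ =
      ‖z ^ (2 * d) - 1‖ / ‖z - z⁻¹‖ := by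
    rw [hG, norm_div]
  refine ⟨heq, ?_⟩
  rw [heq]
  have habs : ‖z - z⁻¹‖ = ‖z ^ 2 - 1‖ / ‖z‖ := by
    rw [show z - z⁻¹ = (z ^ 2 - 1) / z by field_simp, norm_div]
  have hbpos : 0 < ‖z ^ 2 - 1‖ := by
    exact norm_pos_iff.mpr hsq
  have hzpos : 0 < ‖z‖ := by exact norm_pos_iff.mpr hz
  rw [habs, div_div_eq_mul_div]
  -- goal: |z^(2d)-1| * |z| / |z^2-1| ≤ |z| * min ...
  have hwle : ‖z ^ 2‖ ≤ 1 := by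
    rw [norm_pow]; exact pow_le_one₀ (norm_nonneg z) hz1
  rw [mul_min_of_nonneg _ _ (norm_nonneg z), le_min_iff]
  constructor
  · -- ≤ |z| * (m - n)
    have key : ‖z ^ (2 * d) - 1‖ ≤ d * ‖z ^ 2 - 1‖ := by
      have := geom_sum_mul (z ^ 2) d
      have h2 : z ^ (2 * d) - 1 = (∑ i ∈ Finset.range d, (z ^ 2) ^ i) * (z ^ 2 - 1) := by
        rw [this, ← pow_mul, mul_comm 2 d]
      rw [h2, norm_mul]
      refine mul_le_mul_of_nonneg_right ?_ (norm_nonneg _)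
      calc ‖∑ i ∈ Finset.range d, (z ^ 2) ^ i‖
          ≤ ∑ i ∈ Finset.range d, ‖(z ^ 2) ^ i‖ := by
            exact norm_sum_le _ _
        _ ≤ ∑ i ∈ Finset.range d, 1 := by
            refine Finset.sum_le_sum fun i _ => ?_
            rw [norm_pow]
            exact pow_le_one₀ (norm_nonneg _) hwle
        _ = d := by simp
    rw [div_le_iff₀ hbpos]
    have hcast : (m : ℝ) - n = (d : ℝ) := by rw [hdd, Nat.cast_sub h.le]
    rw [hcast]
    calc ‖z ^ (2 * d) - 1‖ * ‖z‖
        ≤ (d * ‖z ^ 2 - 1‖) * ‖z‖ :=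
          mul_le_mul_of_nonneg_right key (norm_nonneg z)
      _ = ‖z‖ * d * ‖z ^ 2 - 1‖ := by ring
  · -- ≤ |z| * (2 / |z^2-1|)
    have key : ‖z ^ (2 * d) - 1‖ ≤ 2 := by
      calc ‖z ^ (2 * d) - 1‖
          ≤ ‖z ^ (2 * d)‖ + ‖(1 : ℂ)‖ := by
            simpa using norm_sub_le (z ^ (2*d)) 1
        _ ≤ 1 + 1 := by
            gcongr
            · rw [norm_pow]; exact pow_le_one₀ (norm_nonneg z) hz1
            · simp
        _ = 2 := by norm_num
    rw [div_le_iff₀ hbpos]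
    calc ‖z ^ (2 * d) - 1‖ * ‖z‖
        ≤ 2 * ‖z‖ := mul_le_mul_of_nonneg_right key (norm_nonneg z)
      _ = ‖z‖ * (2 / ‖z ^ 2 - 1‖) * ‖z ^ 2 - 1‖ := by
          field_simp
end

section
/- Let (d_m)_{m≥1} be a summable sequence of nonnegative reals with tail sums σ₀(n) = Σ_{m>n} d_m. Then for every j ≥ 1 and n ≥ 0, Σ_{m>n} d_m · σ₀(m)^j ≤ σ₀(n)^{j+1} / j. -/
lemma step_pow_bound (a b : ℝ) (ha : 0 ≤ a) (hab : a ≤ b) (j : ℕ) :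
    (b - a) * a ^ j ≤ (b ^ (j + 1) - a ^ (j + 1)) / (j + 1) := by
  rw [le_div_iff₀ (by positivity)]
  rw [← geom_sum₂_mul b a (j + 1)]
  have hsum : (j + 1 : ℝ) * a ^ j ≤ ∑ i ∈ Finset.range (j + 1), b ^ i * a ^ (j + 1 - 1 - i) := by
    calc (j + 1 : ℝ) * a ^ j = ∑ _i ∈ Finset.range (j + 1), a ^ j := by
          rw [Finset.sum_const]; simp [mul_comm]
      _ ≤ _ := by
          apply Finset.sum_le_sum
          intro i hi
          have hi' : i ≤ j := by simp [Finset.mem_range] at hi; omega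
          have h1 : a ^ j = a ^ i * a ^ (j - i) := by rw [← pow_add]; congr 1; omega
          have h2 : j + 1 - 1 - i = j - i := by omega
          rw [h1, h2]
          exact mul_le_mul_of_nonneg_right (pow_le_pow_left₀ ha hab i) (pow_nonneg ha _)
  nlinarith [sub_nonneg.mpr hab, pow_nonneg ha j]

theorem tail_sum_power_bound (d : ℕ → ℝ) (hd : ∀ m, 0 ≤ d m) (hsum : Summable d)
    (σ : ℕ → ℝ) (hσ : ∀ n, σ n = ∑' m : ℕ, d (n + 1 + m))
    (j : ℕ) (hj : 1 ≤ j) (n : ℕ) :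
    ∑' m : ℕ, d (n + 1 + m) * (σ (n + 1 + m)) ^ j ≤ (σ n) ^ (j + 1) / j := by
  have hσ0 : ∀ k, 0 ≤ σ k := by
    intro k; rw [hσ]; exact tsum_nonneg fun m => hd _
  have hrec : ∀ k, σ k = d (k + 1) + σ (k + 1) := by
    intro k
    have hs : Summable (fun m => d (k + 1 + m)) := by
      have := (summable_nat_add_iff (k + 1)).2 hsum
      exact this.congr (fun m => by rw [add_comm])
    rw [hσ k, hσ (k + 1), Summable.tsum_eq_zero_add hs]
    simp only [add_zero]
    congr 1
    exact tsum_congr fun m => by congr 1; omega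
  have hjr : (0 : ℝ) < j := by exact_mod_cast hj
  apply Real.tsum_le_of_sum_range_le (fun m => mul_nonneg (hd _) (pow_nonneg (hσ0 _) _))
  intro N
  have hstep : ∀ m, d (n + 1 + m) * σ (n + 1 + m) ^ j ≤
      (σ (n + m) ^ (j + 1) - σ (n + (m + 1)) ^ (j + 1)) / (j + 1) := by
    intro m
    have h := hrec (n + m)
    have he : n + m + 1 = n + 1 + m := by omega
    have hd' : d (n + 1 + m) = σ (n + m) - σ (n + 1 + m) := by
      rw [← he]; linarith [h]
    rw [hd', ← he]
    exact step_pow_bound _ _ (hσ0 _) (by nlinarith [hd (n + m + 1), h]) j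
  calc ∑ m ∈ Finset.range N, d (n + 1 + m) * σ (n + 1 + m) ^ j
      ≤ ∑ m ∈ Finset.range N, (σ (n + m) ^ (j + 1) - σ (n + m + 1) ^ (j + 1)) / (j + 1) :=
        Finset.sum_le_sum fun m _ => hstep m
    _ = (σ (n + 0) ^ (j + 1) - σ (n + N) ^ (j + 1)) / (j + 1) := by
        rw [← Finset.sum_div]
        congr 1
        exact Finset.sum_range_sub' (fun m => σ (n + m) ^ (j + 1)) N
    _ ≤ σ n ^ (j + 1) / (j + 1) := by
        simp only [add_zero]
        rw [div_le_div_iff_of_pos_right (by positivity : (0:ℝ) < (j:ℝ) + 1)]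
        nlinarith [pow_nonneg (hσ0 (n + N)) (j + 1)]
    _ ≤ σ n ^ (j + 1) / j :=
        div_le_div_of_nonneg_left (pow_nonneg (hσ0 n) _) hjr (by linarith)
end

section
/- Suppose the kernel bound |K(n,m)| ≤ C · d_m holds for all m > n ≥ 0, where Σ d_m < ∞ and C ≥ 0, and define iterates f_{n,1} = Σ_{m>n} K(n,m), f_{n,j+1} = Σ_{m>n} K(n,m) f_{m,j}. Then |f_{n,j}| ≤ (C σ₀(n))^j / (j-1)! for all j ≥ 1, where σ₀(n) = Σ_{m>n} d_m. Consequently the series f_n = Σ_{j≥1} f_{n,j} converges absolutely with |f_n| ≤ C σ₀(n) · exp(C σ₀(n)). -/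
lemma aux_pow_ineq (a b : ℝ) (j : ℕ) (hb : 0 ≤ b) (hba : b ≤ a) :
    (a - b) * b ^ j ≤ (a ^ (j + 1) - b ^ (j + 1)) / (j + 1) := by
  rw [le_div_iff₀ (by positivity)]
  rw [← geom_sum₂_mul a b (j + 1)]
  have hkey : ((j : ℝ) + 1) * b ^ j ≤ ∑ i ∈ Finset.range (j + 1), a ^ i * b ^ (j + 1 - 1 - i) := by
    have : ∀ i ∈ Finset.range (j + 1), b ^ j ≤ a ^ i * b ^ (j + 1 - 1 - i) := by
      intro i hi
      have hij : i ≤ j := by simpa using Nat.lt_succ_iff.mp (Finset.mem_range.mp hi)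
      calc b ^ j = b ^ i * b ^ (j - i) := by rw [← pow_add]; congr 1; omega
        _ ≤ a ^ i * b ^ (j + 1 - 1 - i) := by
            simp only [Nat.add_sub_cancel]
            exact mul_le_mul_of_nonneg_right (pow_le_pow_left₀ hb hba i) (by positivity)
    calc ((j : ℝ) + 1) * b ^ j = ∑ _i ∈ Finset.range (j + 1), b ^ j := by
          rw [Finset.sum_const, Finset.card_range, nsmul_eq_mul]; push_cast; ring
      _ ≤ _ := Finset.sum_le_sum this
  calc (a - b) * b ^ j * ((j : ℝ) + 1) = (((j : ℝ) + 1) * b ^ j) * (a - b) := by ring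
    _ ≤ (∑ i ∈ Finset.range (j + 1), a ^ i * b ^ (j + 1 - 1 - i)) * (a - b) :=
        mul_le_mul_of_nonneg_right hkey (by linarith)

theorem successive_approximations_bound (K : ℕ → ℕ → ℂ) (d : ℕ → ℝ) (C : ℝ)
    (hC : 0 ≤ C) (hd : ∀ m, 0 ≤ d m) (hsum : Summable d)
    (hK : ∀ n m : ℕ, n < m → ‖K n m‖ ≤ C * d m)
    (σ : ℕ → ℝ) (hσ : ∀ n, σ n = ∑' m : ℕ, d (n + 1 + m))
    (f : ℕ → ℕ → ℂ)
    (hf1 : ∀ n, f n 1 = ∑' m : ℕ, K n (n + 1 + m))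
    (hfstep : ∀ n j, 1 ≤ j → f n (j + 1) = ∑' m : ℕ, K n (n + 1 + m) * f (n + 1 + m) j) :
    (∀ j, 1 ≤ j → ∀ n, ‖f n j‖ ≤ (C * σ n) ^ j / (Nat.factorial (j - 1) : ℝ)) ∧
    (∀ n, Summable (fun j : ℕ => f n (j + 1)) ∧
      ‖∑' j : ℕ, f n (j + 1)‖ ≤ C * σ n * Real.exp (C * σ n)) := by
  -- basic facts about σ
  have hsum' : ∀ n, Summable (fun m => d (n + 1 + m)) := by
    intro n
    exact hsum.comp_injective (fun a b h => by omega)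
  have hσ0 : ∀ n, 0 ≤ σ n := by
    intro n; rw [hσ n]; exact tsum_nonneg (fun m => hd _)
  have hstep : ∀ n, σ n = d (n + 1) + σ (n + 1) := by
    intro n
    rw [hσ n, hσ (n + 1), (hsum' n).tsum_eq_zero_add]
    congr 1
    exact tsum_congr (fun m => by congr 1; omega)
  have hσ_anti : ∀ n k, σ (n + k) ≤ σ n := by
    intro n k
    induction k with
    | zero => simp
    | succ k ih =>
      have := hstep (n + k)
      have hdk := hd (n + k + 1)
      have : σ (n + (k + 1)) ≤ σ (n + k) := by
        have h' : n + (k + 1) = (n + k) + 1 := by omega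
        rw [h']; linarith
      linarith
  have hσle : ∀ n m, σ (n + 1 + m) ≤ σ n := fun n m => by
    have := hσ_anti n (1 + m); rwa [← add_assoc] at this
  -- key summability and tail bound
  have hSg : ∀ n (j : ℕ), Summable (fun m => d (n + 1 + m) * σ (n + 1 + m) ^ j) := by
    intro n j
    refine Summable.of_nonneg_of_le (fun m => mul_nonneg (hd _) (pow_nonneg (hσ0 _) j)) (fun m => ?_)
      ((hsum' n).mul_right (σ n ^ j))
    exact mul_le_mul_of_nonneg_left
      (pow_le_pow_left₀ (hσ0 _) (hσle n m) j) (hd _)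
  have hkeysum : ∀ n (j : ℕ),
      (∑' m, d (n + 1 + m) * σ (n + 1 + m) ^ j) ≤ σ n ^ (j + 1) / (j + 1) := by
    intro n j
    apply Summable.tsum_le_of_sum_range_le (hSg n j)
    intro N
    have h1 : ∀ k, d (n + 1 + k) * σ (n + 1 + k) ^ j
        ≤ (σ (n + k) ^ (j + 1) - σ (n + (k + 1)) ^ (j + 1)) / (j + 1) := by
      intro k
      have hs := hstep (n + k)
      have hdd : d (n + 1 + k) = σ (n + k) - σ (n + k + 1) := by
        have : n + k + 1 = n + 1 + k := by omega
        rw [← this]; linarith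
      have hle : σ (n + k + 1) ≤ σ (n + k) := by
        have := hd (n + k + 1); linarith
      have := aux_pow_ineq (σ (n + k)) (σ (n + k + 1)) j (hσ0 _) hle
      have heq : n + (k + 1) = n + k + 1 := by omega
      rw [hdd, heq]
      have heq2 : n + 1 + k = n + k + 1 := by omega
      rw [heq2]
      exact this
    calc ∑ k ∈ Finset.range N, d (n + 1 + k) * σ (n + 1 + k) ^ j
        ≤ ∑ k ∈ Finset.range N, (σ (n + k) ^ (j + 1) - σ (n + (k + 1)) ^ (j + 1)) / (j + 1) :=
          Finset.sum_le_sum (fun k _ => h1 k)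
      _ = (σ (n + 0) ^ (j + 1) - σ (n + N) ^ (j + 1)) / (j + 1) := by
          rw [← Finset.sum_div, Finset.sum_range_sub' (fun k => σ (n + k) ^ (j + 1)) N]
      _ ≤ σ n ^ (j + 1) / (j + 1) := by
          apply div_le_div_of_nonneg_right ?_ (by positivity)
          · have := pow_nonneg (hσ0 (n + N)) (j + 1)
            simp only [Nat.add_zero]
            linarith
  -- main induction
  have main : ∀ j n, ‖f n (j + 1)‖ ≤ (C * σ n) ^ (j + 1) / (Nat.factorial j : ℝ) := by
    intro j
    induction j with
    | zero =>
      intro n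
      rw [hf1 n]
      have hsK : Summable (fun m => ‖K n (n + 1 + m)‖) :=
        Summable.of_nonneg_of_le (fun m => norm_nonneg _)
          (fun m => hK n (n + 1 + m) (by omega)) ((hsum' n).mul_left C)
      calc ‖∑' m, K n (n + 1 + m)‖ ≤ ∑' m, ‖K n (n + 1 + m)‖ := norm_tsum_le_tsum_norm hsK
        _ ≤ ∑' m, C * d (n + 1 + m) :=
            Summable.tsum_le_tsum (fun m => hK n (n + 1 + m) (by omega)) hsK ((hsum' n).mul_left C)
        _ = C * σ n := by rw [tsum_mul_left, hσ n]
        _ = (C * σ n) ^ (0 + 1) / (Nat.factorial 0 : ℝ) := by simp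
    | succ j ih =>
      intro n
      rw [hfstep n (j + 1) (by omega)]
      set g := fun m => C * d (n + 1 + m) * ((C * σ (n + 1 + m)) ^ (j + 1) / (Nat.factorial j : ℝ))
        with hg
      have hgsum : Summable g := by
        have : g = fun m => (C ^ (j + 2) / (Nat.factorial j : ℝ)) *
            (d (n + 1 + m) * σ (n + 1 + m) ^ (j + 1)) := by
          funext m; simp only [hg]; ring
        rw [this]
        exact (hSg n (j + 1)).mul_left _
      have hbound : ∀ m, ‖K n (n + 1 + m) * f (n + 1 + m) (j + 1)‖ ≤ g m := by
        intro m
        rw [norm_mul]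
        apply mul_le_mul (hK n (n + 1 + m) (by omega)) (ih (n + 1 + m)) (norm_nonneg _)
        have := hd (n + 1 + m); positivity
      have hsnorm : Summable (fun m => ‖K n (n + 1 + m) * f (n + 1 + m) (j + 1)‖) :=
        Summable.of_nonneg_of_le (fun m => norm_nonneg _) hbound hgsum
      calc ‖∑' m, K n (n + 1 + m) * f (n + 1 + m) (j + 1)‖
          ≤ ∑' m, ‖K n (n + 1 + m) * f (n + 1 + m) (j + 1)‖ := norm_tsum_le_tsum_norm hsnorm
        _ ≤ ∑' m, g m := Summable.tsum_le_tsum hbound hsnorm hgsum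
        _ = (C ^ (j + 2) / (Nat.factorial j : ℝ)) *
            ∑' m, (d (n + 1 + m) * σ (n + 1 + m) ^ (j + 1)) := by
            rw [← tsum_mul_left]; exact tsum_congr (fun m => by simp only [hg]; ring)
        _ ≤ (C ^ (j + 2) / (Nat.factorial j : ℝ)) * (σ n ^ (j + 2) / ((j : ℝ) + 2)) := by
            apply mul_le_mul_of_nonneg_left ?_ (by positivity)
            have h := hkeysum n (j + 1)
            have h2 : ((j + 1 : ℕ) : ℝ) + 1 = (j : ℝ) + 2 := by push_cast; ring
            rw [h2] at h
            exact h
        _ ≤ (C * σ n) ^ (j + 1 + 1) / (Nat.factorial (j + 1) : ℝ) := by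
            rw [mul_pow, div_mul_div_comm]
            have hnum : 0 ≤ C ^ (j + 2) * σ n ^ (j + 2) :=
              mul_nonneg (pow_nonneg hC _) (pow_nonneg (hσ0 n) _)
            have hfac : (0 : ℝ) < (Nat.factorial (j + 1) : ℝ) := by
              exact_mod_cast Nat.factorial_pos (j + 1)
            have h1 : (0 : ℝ) < (Nat.factorial j : ℝ) := by
              exact_mod_cast Nat.factorial_pos j
            have hle : ((Nat.factorial (j + 1) : ℕ) : ℝ) ≤ (Nat.factorial j : ℝ) * ((j : ℝ) + 2) := by
              rw [Nat.factorial_succ]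
              push_cast
              nlinarith [Nat.cast_nonneg (α := ℝ) j]
            calc C ^ (j + 2) * σ n ^ (j + 2) / ((Nat.factorial j : ℝ) * ((j : ℝ) + 2))
                ≤ C ^ (j + 2) * σ n ^ (j + 2) / ((Nat.factorial (j + 1) : ℝ)) := by
                  apply div_le_div_of_nonneg_left hnum hfac hle
              _ = _ := by norm_num
  constructor
  · intro j hj n
    obtain ⟨j', rfl⟩ : ∃ j', j = j' + 1 := ⟨j - 1, by omega⟩
    simpa using main j' n
  · intro n
    have hσn : 0 ≤ C * σ n := mul_nonneg hC (hσ0 n)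
    have hgsum : Summable (fun j : ℕ => (C * σ n) * ((C * σ n) ^ j / (Nat.factorial j : ℝ))) :=
      (Real.summable_pow_div_factorial (C * σ n)).mul_left _
    have hb : ∀ j : ℕ, ‖f n (j + 1)‖ ≤ (C * σ n) * ((C * σ n) ^ j / (Nat.factorial j : ℝ)) := by
      intro j
      calc ‖f n (j + 1)‖ ≤ (C * σ n) ^ (j + 1) / (Nat.factorial j : ℝ) := main j n
        _ = (C * σ n) * ((C * σ n) ^ j / (Nat.factorial j : ℝ)) := by rw [pow_succ']; ring
    have hfs : Summable (fun j : ℕ => f n (j + 1)) :=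
      Summable.of_norm_bounded hgsum hb
    refine ⟨hfs, ?_⟩
    have hsnorm : Summable (fun j : ℕ => ‖f n (j + 1)‖) :=
      Summable.of_nonneg_of_le (fun j => norm_nonneg _) hb hgsum
    calc ‖∑' j : ℕ, f n (j + 1)‖ ≤ ∑' j : ℕ, ‖f n (j + 1)‖ := norm_tsum_le_tsum_norm hsnorm
      _ ≤ ∑' j : ℕ, (C * σ n) * ((C * σ n) ^ j / (Nat.factorial j : ℝ)) :=
          Summable.tsum_le_tsum hb hsnorm hgsum
      _ = (C * σ n) * ∑' j : ℕ, ((C * σ n) ^ j / (Nat.factorial j : ℝ)) := tsum_mul_left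
      _ = C * σ n * Real.exp (C * σ n) := by
          rw [Real.exp_eq_exp_ℝ, NormedSpace.exp_eq_tsum_div]
end

section
/- Suppose (v_n(z))_{n≥0} solves the discrete integral equation v_n(z) = z^n + Σ_{m=n+1}^∞ J(n,m;z) v_m(z) for all n ≥ 0, where J(n,m;z) = -b_m G(n,m;z) + (1 - a_{m-1} c_{m-1}) G(n,m-1;z) and G is the Green kernel. Then v_n satisfies the three-term recurrence v_{n-1} + b_n v_n + a_n c_n v_{n+1} = (z + z^{-1}) v_n for all n ≥ 1. -/
noncomputable def Jker (a b c : ℕ → ℂ) (z : ℂ) (n m : ℕ) : ℂ :=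
  -b m * G z n m + (1 - a (m - 1) * c (m - 1)) * G z (n) (m - 1)

lemma zpow_key (z : ℂ) (hz : z ≠ 0) (d : ℤ) :
    (z ^ (d + 1) - z ^ (-(d + 1))) + (z ^ (d - 1) - z ^ (-(d - 1)))
      = (z + z⁻¹) * (z ^ d - z ^ (-d)) := by
  have h1 : z ^ (d + 1) = z ^ d * z := zpow_add_one₀ hz d
  have h2 : z ^ (d - 1) = z ^ d * z⁻¹ := zpow_sub_one₀ hz d
  have h3 : z ^ (-(d + 1)) = z ^ (-d) * z⁻¹ := by
    rw [show -(d + 1) = -d - 1 by ring, zpow_sub_one₀ hz]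
  have h4 : z ^ (-(d - 1)) = z ^ (-d) * z := by
    rw [show -(d - 1) = -d + 1 by ring, zpow_add_one₀ hz]
  rw [h1, h2, h3, h4]; ring

lemma G_succ (z : ℂ) (hne : z - z⁻¹ ≠ 0) (k : ℕ) : G z k (k + 1) = 1 := by
  rw [G, if_pos (Nat.lt_succ_self k),
    show ((k + 1 : ℕ) : ℤ) - (k : ℕ) = 1 by push_cast; ring,
    show ((k : ℕ) : ℤ) - ((k + 1 : ℕ) : ℤ) = -1 by push_cast; ring,
    zpow_one, zpow_neg_one, div_self hne]

lemma G_rec (z : ℂ) (hz : z ≠ 0) (hne : z - z⁻¹ ≠ 0) (k m : ℕ) (h : k + 1 ≤ m) :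
    G z k m + G z (k + 2) m = (z + z⁻¹) * G z (k + 1) m + (if m = k + 1 then 1 else 0) := by
  rcases Nat.lt_or_ge m (k + 2) with h1 | h1
  · have hm : m = k + 1 := by omega
    subst hm
    rw [G_succ z hne, if_pos rfl]
    rw [G, if_neg (by omega), G, if_neg (by omega)]
    ring
  rcases Nat.lt_or_ge m (k + 3) with h2 | h2
  · have hm : m = k + 2 := by omega
    subst hm
    rw [if_neg (by omega)]
    rw [G, if_pos (by omega : k < k + 2), G, if_neg (lt_irrefl (k + 2)),
      G, if_pos (by omega : k + 1 < k + 2)]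
    rw [show ((k + 2 : ℕ) : ℤ) - (k : ℕ) = 2 by push_cast; ring,
      show ((k : ℕ) : ℤ) - ((k + 2 : ℕ) : ℤ) = -2 by push_cast; ring,
      show ((k + 2 : ℕ) : ℤ) - ((k + 1 : ℕ) : ℤ) = 1 by push_cast; ring,
      show ((k + 1 : ℕ) : ℤ) - ((k + 2 : ℕ) : ℤ) = -1 by push_cast; ring]
    rw [zpow_one, zpow_neg_one, show (2 : ℤ) = 1 + 1 by ring, zpow_add_one₀ hz, zpow_one,
      show -(1 + 1 : ℤ) = -1 - 1 by ring, zpow_sub_one₀ hz, zpow_neg_one]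
    rw [div_self hne, add_zero, add_zero, mul_one, div_eq_iff hne]
    ring
  · obtain ⟨j, rfl⟩ : ∃ j, m = k + 3 + j := ⟨m - (k + 3), by omega⟩
    rw [if_neg (by omega)]
    rw [G, if_pos (by omega : k < k + 3 + j), G, if_pos (by omega : k + 2 < k + 3 + j),
      G, if_pos (by omega : k + 1 < k + 3 + j)]
    set d : ℤ := (j : ℤ) + 2 with hd
    rw [show ((k + 3 + j : ℕ) : ℤ) - (k : ℕ) = d + 1 by rw [hd]; push_cast; ring,
      show ((k : ℕ) : ℤ) - ((k + 3 + j : ℕ) : ℤ) = -(d + 1) by rw [hd]; push_cast; ring,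
      show ((k + 3 + j : ℕ) : ℤ) - ((k + 2 : ℕ) : ℤ) = d - 1 by rw [hd]; push_cast; ring,
      show ((k + 2 : ℕ) : ℤ) - ((k + 3 + j : ℕ) : ℤ) = -(d - 1) by rw [hd]; push_cast; ring,
      show ((k + 3 + j : ℕ) : ℤ) - ((k + 1 : ℕ) : ℤ) = d by rw [hd]; push_cast; ring,
      show ((k + 1 : ℕ) : ℤ) - ((k + 3 + j : ℕ) : ℤ) = -d by rw [hd]; push_cast; ring]
    rw [← add_div, zpow_key z hz d, add_zero, mul_div_assoc]

theorem integral_equation_implies_recurrence (a b c : ℕ → ℂ)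
    (ha0 : a 0 = 1) (hc0 : c 0 = 1)
    (z : ℂ) (hz : z ≠ 0) (hz1 : ‖z‖ ≤ 1) (hz2 : z ^ 2 ≠ 1)
    (v : ℕ → ℂ)
    (hsum : ∀ n : ℕ, Summable (fun m : ℕ => ‖Jker a b c z n (n + 1 + m) * v (n + 1 + m)‖))
    (hv : ∀ n : ℕ, v n = z ^ n + ∑' m : ℕ, Jker a b c z n (n + 1 + m) * v (n + 1 + m)) :
    ∀ n : ℕ, 1 ≤ n → v (n - 1) + b n * v n + a n * c n * v (n + 1) = (z + z⁻¹) * v n := by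
  have hne : z - z⁻¹ ≠ 0 := by
    intro h
    rw [sub_eq_zero] at h
    apply hz2
    rw [sq]
    nth_rewrite 1 [h]
    exact inv_mul_cancel₀ hz
  have hsum' : ∀ i : ℕ, Summable (fun m : ℕ => Jker a b c z i (i + 1 + m) * v (i + 1 + m)) :=
    fun i => (hsum i).of_norm
  intro n hn
  obtain ⟨k, rfl⟩ : ∃ k, n = k + 1 := ⟨n - 1, by omega⟩
  simp only [Nat.add_sub_cancel]
  -- summability of the shifted tails
  have hA : Summable (fun j : ℕ => Jker a b c z k (k + 2 + j) * v (k + 2 + j)) := by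
    have h1 := (summable_nat_add_iff (f := fun m : ℕ =>
      Jker a b c z k (k + 1 + m) * v (k + 1 + m)) 1).2 (hsum' k)
    exact h1.congr fun j => by rw [show k + 1 + (j + 1) = k + 2 + j by omega]
  have hB : Summable (fun j : ℕ => Jker a b c z (k + 1) (k + 2 + j) * v (k + 2 + j)) :=
    (hsum' (k + 1)).congr fun j => by rw [show k + 1 + 1 + j = k + 2 + j by omega]
  have hC : Summable (fun j : ℕ => Jker a b c z (k + 2) (k + 2 + j) * v (k + 2 + j)) := by
    apply (summable_nat_add_iff (f := fun j : ℕ =>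
      Jker a b c z (k + 2) (k + 2 + j) * v (k + 2 + j)) 1).1
    exact (hsum' (k + 2)).congr fun j => by rw [show k + 2 + 1 + j = k + 2 + (j + 1) by omega]
  -- the three integral equations in aligned form
  have hvk : v k = z ^ k - b (k + 1) * v (k + 1)
      + ∑' j : ℕ, Jker a b c z k (k + 2 + j) * v (k + 2 + j) := by
    rw [hv k, Summable.tsum_eq_zero_add (hsum' k)]
    have h0 : Jker a b c z k (k + 1 + 0) * v (k + 1 + 0) = -b (k + 1) * v (k + 1) := by
      simp only [Nat.add_zero]
      rw [Jker, Nat.add_sub_cancel, G_succ z hne, G, if_neg (lt_irrefl k)]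
      ring
    have ht : (∑' j : ℕ, Jker a b c z k (k + 1 + (j + 1)) * v (k + 1 + (j + 1)))
        = ∑' j : ℕ, Jker a b c z k (k + 2 + j) * v (k + 2 + j) :=
      tsum_congr fun j => by rw [show k + 1 + (j + 1) = k + 2 + j by omega]
    rw [h0, ht]
    ring
  have hv1 : v (k + 1) = z ^ (k + 1)
      + ∑' j : ℕ, Jker a b c z (k + 1) (k + 2 + j) * v (k + 2 + j) := by
    rw [hv (k + 1)]
  have hv2 : v (k + 2) = z ^ (k + 2)
      + ∑' j : ℕ, Jker a b c z (k + 2) (k + 2 + j) * v (k + 2 + j) := by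
    rw [hv (k + 2)]
    congr 1
    rw [Summable.tsum_eq_zero_add hC]
    have h0 : Jker a b c z (k + 2) (k + 2 + 0) * v (k + 2 + 0) = 0 := by
      simp only [Nat.add_zero]
      rw [Jker, G, if_neg (lt_irrefl _), G, if_neg (by omega : ¬ k + 2 < k + 2 - 1)]
      ring
    rw [h0, zero_add]
    exact tsum_congr fun m => by rw [show k + 2 + 1 + m = k + 2 + (m + 1) by omega]
  -- termwise kernel identity
  have hterm : ∀ j : ℕ,
      Jker a b c z k (k + 2 + j) * v (k + 2 + j)
        + Jker a b c z (k + 2) (k + 2 + j) * v (k + 2 + j)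
      = (z + z⁻¹) * (Jker a b c z (k + 1) (k + 2 + j) * v (k + 2 + j))
        + (if j = 0 then (1 - a (k + 1) * c (k + 1)) * v (k + 2) else 0) := by
    intro j
    rcases j with _ | j
    · have g1 := G_rec z hz hne k (k + 2) (by omega)
      have g2 := G_rec z hz hne k (k + 1) (by omega)
      rw [if_neg (by omega : ¬ k + 2 = k + 1)] at g1
      rw [if_pos rfl] at g2
      simp only [Nat.add_zero, if_true]
      simp only [Jker, show k + 2 - 1 = k + 1 from rfl]
      linear_combination (-(b (k + 2)) * v (k + 2)) * g1
        + ((1 - a (k + 1) * c (k + 1)) * v (k + 2)) * g2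
    · have e1 : k + 2 + (j + 1) - 1 = k + 1 + (j + 1) := by omega
      have g1 := G_rec z hz hne k (k + 2 + (j + 1)) (by omega)
      have g2 := G_rec z hz hne k (k + 1 + (j + 1)) (by omega)
      rw [if_neg (by omega : ¬ k + 2 + (j + 1) = k + 1)] at g1
      rw [if_neg (by omega : ¬ k + 1 + (j + 1) = k + 1)] at g2
      simp only [Nat.succ_ne_zero, if_false]
      simp only [Jker, e1]
      linear_combination (-(b (k + 2 + (j + 1))) * v (k + 2 + (j + 1))) * g1
        + ((1 - a (k + 1 + (j + 1)) * c (k + 1 + (j + 1))) * v (k + 2 + (j + 1))) * g2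
  -- summed kernel identity
  have hkey : (∑' j : ℕ, Jker a b c z k (k + 2 + j) * v (k + 2 + j))
      + (∑' j : ℕ, Jker a b c z (k + 2) (k + 2 + j) * v (k + 2 + j))
      = (z + z⁻¹) * (∑' j : ℕ, Jker a b c z (k + 1) (k + 2 + j) * v (k + 2 + j))
        + (1 - a (k + 1) * c (k + 1)) * v (k + 2) := by
    rw [← Summable.tsum_add hA hC, tsum_congr hterm]
    have hite : Summable (fun j : ℕ =>
        if j = 0 then (1 - a (k + 1) * c (k + 1)) * v (k + 2) else 0) :=
      summable_of_ne_finset_zero (s := {0}) fun j hj => if_neg (by simpa using hj)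
    rw [Summable.tsum_add (hB.mul_left (z + z⁻¹)) hite, tsum_mul_left, tsum_ite_eq]
  have p : z ^ (k + 2) + z ^ k = (z + z⁻¹) * z ^ (k + 1) := by
    field_simp
    ring
  linear_combination hvk + hkey + hv2 - (z + z⁻¹) * hv1 + p
end
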